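/- arXiv:2508.15176 — 2 statements merged into one kernel-verified Lean document; each statement's English description precedes it below -/
import Mathlib

section
/- Let the finite group G = AB be the mutually permutable product of subgroups A and B, and let p be a prime. Then O^{p'}(G) = (A ∩ O^{p'}(G))(B ∩ O^{p'}(G)); in particular, O^{p'}(G) is the product of its intersections with A and B, these intersections contain O^{p'}(A) and O^{p'}(B) respectively, and this product is a normal subgroup of G. -/
open Subgroup Pointwise

/-- `G = AB` is the *mutually permutable product* of the subgroups `A` and `B`:
every subgroup of `B` permutes with `A` and every subgroup of `A` permutes with `B`. -/
def MutuallyPermutableProduct {G : Type*} [Group G] (A B : Subgroup G) : Prop :=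
  (A : Set G) * (B : Set G) = Set.univ ∧
  (∀ U : Subgroup G, U ≤ B → (A : Set G) * (U : Set G) = (U : Set G) * (A : Set G)) ∧
  (∀ V : Subgroup G, V ≤ A → (B : Set G) * (V : Set G) = (V : Set G) * (B : Set G))

/-- `O^{p'}(G)`: the smallest normal subgroup of `G` whose quotient is a `p'`-group. -/
def pPrimeResidual (p : ℕ) (G : Type*) [Group G] : Subgroup G :=
  sInf {N : Subgroup G | N.Normal ∧ ¬ p ∣ N.index}

/-! ### Auxiliary lemmas -/

/-- Any `p`-element lies in any normal subgroup whose index is not divisible by `p`. -/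
theorem PPR.pelem_mem {G : Type*} [Group G] {p : ℕ} (hp : p.Prime) {N : Subgroup G}
    (hN : N.Normal) (hind : ¬ p ∣ N.index) {x : G} {k : ℕ} (hx : orderOf x = p ^ k) :
    x ∈ N := by
  haveI := hN
  have h1 : orderOf ((x : G ⧸ N)) ∣ p ^ k := hx ▸ orderOf_map_dvd (QuotientGroup.mk' N) x
  have h2 : orderOf ((x : G ⧸ N)) ∣ N.index := by
    rw [Subgroup.index_eq_card]; exact orderOf_dvd_natCard _
  have hcop : Nat.Coprime (p ^ k) N.index :=
    Nat.Coprime.pow_left _ (hp.coprime_iff_not_dvd.mpr hind)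
  have h3 : orderOf ((x : G ⧸ N)) ∣ Nat.gcd (p ^ k) N.index := Nat.dvd_gcd h1 h2
  rw [Nat.coprime_iff_gcd_eq_one.mp hcop] at h3
  exact (QuotientGroup.eq_one_iff x).mp (orderOf_eq_one_iff.mp (Nat.dvd_one.mp h3))

theorem PPR.closure_normal {G : Type*} [Group G] (p : ℕ) :
    (Subgroup.closure {x : G | ∃ k : ℕ, orderOf x = p ^ k}).Normal := by
  constructor
  intro n hn g
  induction hn using Subgroup.closure_induction with
  | mem x hx =>
    obtain ⟨k, hk⟩ := hx
    refine Subgroup.subset_closure ⟨k, ?_⟩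
    have h2 : g * x * g⁻¹ = (MulAut.conj g) x := rfl
    rw [h2, (MulAut.conj g).orderOf_eq x, hk]
  | one => simpa using Subgroup.one_mem _
  | mul x y hx hy hx' hy' =>
    have : g * (x * y) * g⁻¹ = (g * x * g⁻¹) * (g * y * g⁻¹) := by group
    rw [this]; exact Subgroup.mul_mem _ hx' hy'
  | inv x hx hx' =>
    have : g * x⁻¹ * g⁻¹ = (g * x * g⁻¹)⁻¹ := by group
    rw [this]; exact Subgroup.inv_mem _ hx'

theorem PPR.closure_index {G : Type*} [Group G] [Finite G] {p : ℕ} (hp : p.Prime) :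
    ¬ p ∣ (Subgroup.closure {x : G | ∃ k : ℕ, orderOf x = p ^ k}).index := by
  intro hdvd
  haveI : Fact p.Prime := ⟨hp⟩
  set T := Subgroup.closure {x : G | ∃ k : ℕ, orderOf x = p ^ k} with hT
  haveI : T.Normal := PPR.closure_normal p
  rw [Subgroup.index_eq_card] at hdvd
  obtain ⟨y, hy⟩ := exists_prime_orderOf_dvd_card' (G := G ⧸ T) p hdvd
  obtain ⟨g, rfl⟩ := QuotientGroup.mk'_surjective T y
  have hm0 : orderOf g ≠ 0 := (isOfFinOrder_of_finite g).orderOf_pos.ne'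
  have hdvd2 : ordCompl[p] (orderOf g) ∣ orderOf g := Nat.ordCompl_dvd (orderOf g) p
  have hordp : orderOf (g ^ (ordCompl[p] (orderOf g))) = p ^ ((orderOf g).factorization p) := by
    rw [orderOf_pow, Nat.gcd_eq_right hdvd2]
    exact Nat.div_eq_of_eq_mul_left (Nat.ordCompl_pos p hm0)
      (Nat.ordProj_mul_ordCompl_eq_self (orderOf g) p).symm
  have hmem : g ^ (ordCompl[p] (orderOf g)) ∈ T := Subgroup.subset_closure ⟨_, hordp⟩
  have h2 : (QuotientGroup.mk' T g) ^ (ordCompl[p] (orderOf g)) = 1 := by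
    rw [← map_pow]
    exact (QuotientGroup.eq_one_iff _).mpr hmem
  have h3 : p ∣ ordCompl[p] (orderOf g) := by
    have h4 := orderOf_dvd_of_pow_eq_one h2
    rwa [hy] at h4
  exact Nat.not_dvd_ordCompl hp hm0 h3

/-- In a finite group, `O^{p'}(G)` is the subgroup generated by all `p`-elements. -/
theorem PPR.eq_closure {G : Type*} [Group G] [Finite G] {p : ℕ} (hp : p.Prime) :
    pPrimeResidual p G = Subgroup.closure {x : G | ∃ k : ℕ, orderOf x = p ^ k} := by
  apply le_antisymm
  · exact sInf_le ⟨PPR.closure_normal p, PPR.closure_index hp⟩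
  · apply le_sInf
    rintro N ⟨hN, hNi⟩
    rw [Subgroup.closure_le]
    rintro x ⟨k, hk⟩
    exact PPR.pelem_mem hp hN hNi hk

theorem PPR.normal {G : Type*} [Group G] [Finite G] {p : ℕ} (hp : p.Prime) :
    (pPrimeResidual p G).Normal := by
  rw [PPR.eq_closure hp]; exact PPR.closure_normal p

theorem PPR.not_dvd_index {G : Type*} [Group G] [Finite G] {p : ℕ} (hp : p.Prime) :
    ¬ p ∣ (pPrimeResidual p G).index := by
  rw [PPR.eq_closure hp]; exact PPR.closure_index hp

/-- If two subgroups permute, the underlying set of their join is their set product. -/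
theorem PPR.coe_sup_of_mul_comm {G : Type*} [Group G] {H K : Subgroup G}
    (h : (H : Set G) * (K : Set G) = (K : Set G) * (H : Set G)) :
    ((H ⊔ K : Subgroup G) : Set G) = (H : Set G) * (K : Set G) := by
  let P : Subgroup G :=
  { carrier := (H : Set G) * (K : Set G)
    one_mem' := ⟨1, H.one_mem, 1, K.one_mem, one_mul 1⟩
    mul_mem' := by
      intro a b ha hb
      simp only [Set.mem_mul] at ha hb ⊢
      obtain ⟨h1, hh1, k1, hk1, rfl⟩ := ha
      obtain ⟨h2, hh2, k2, hk2, rfl⟩ := hb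
      have hmem : k1 * h2 ∈ (K : Set G) * (H : Set G) := Set.mul_mem_mul hk1 hh2
      rw [← h] at hmem
      simp only [Set.mem_mul] at hmem
      obtain ⟨h3, hh3, k3, hk3, hEq⟩ := hmem
      refine ⟨h1 * h3, H.mul_mem hh1 hh3, k3 * k2, K.mul_mem hk3 hk2, ?_⟩
      have h5 : (h1 * h3) * (k3 * k2) = h1 * (h3 * k3) * k2 := by group
      rw [h5, hEq]; group
    inv_mem' := by
      intro a ha
      simp only [Set.mem_mul] at ha ⊢
      obtain ⟨h1, hh1, k1, hk1, rfl⟩ := ha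
      have hmem : k1⁻¹ * h1⁻¹ ∈ (K : Set G) * (H : Set G) :=
        Set.mul_mem_mul (K.inv_mem hk1) (H.inv_mem hh1)
      rw [← h] at hmem
      simp only [Set.mem_mul] at hmem
      obtain ⟨h2, hh2, k2, hk2, hEq⟩ := hmem
      exact ⟨h2, hh2, k2, hk2, by rw [hEq, mul_inv_rev]⟩ }
  apply Set.Subset.antisymm
  · have hH : H ≤ P := fun x hx => ⟨x, hx, 1, K.one_mem, mul_one x⟩
    have hK : K ≤ P := fun x hx => ⟨1, H.one_mem, x, hx, one_mul x⟩
    exact fun x hx => (sup_le hH hK) hx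
  · intro x hx
    simp only [Set.mem_mul] at hx
    obtain ⟨h1, hh1, k1, hk1, rfl⟩ := hx
    exact Subgroup.mul_mem _ ((le_sup_left : H ≤ H ⊔ K) hh1)
      ((le_sup_right : K ≤ H ⊔ K) hk1)

/-- If `G = HK` (as a set product) then the index of `H` divides the order of `K`. -/
theorem PPR.index_dvd_of_mul_eq_univ {Q : Type*} [Group Q] {H K : Subgroup Q}
    (h : (H : Set Q) * (K : Set Q) = Set.univ) : H.index ∣ Nat.card K := by
  have h' : ∀ q : Q, ∃ k ∈ K, ∃ h1 ∈ H, q = k * h1 := by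
    intro q
    have hq : q⁻¹ ∈ (H : Set Q) * (K : Set Q) := by rw [h]; trivial
    simp only [Set.mem_mul] at hq
    obtain ⟨h1, hh, k, hk, hEq⟩ := hq
    refine ⟨k⁻¹, K.inv_mem hk, h1⁻¹, H.inv_mem hh, ?_⟩
    rw [← mul_inv_rev, hEq, inv_inv]
  let f : K ⧸ (H.subgroupOf K) → Q ⧸ H := Quotient.map' Subtype.val (fun a b hab => by
    rw [QuotientGroup.leftRel_apply] at hab ⊢
    have := (Subgroup.mem_subgroupOf).mp hab
    simpa using this)
  have hfinj : Function.Injective f := by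
    intro a b
    induction a using Quotient.inductionOn' with
    | h a =>
    induction b using Quotient.inductionOn' with
    | h b =>
    intro hEq
    have h2 : ((a : Q) : Q ⧸ H) = ((b : Q) : Q ⧸ H) := hEq
    rw [QuotientGroup.eq] at h2
    apply Quotient.sound'
    rw [QuotientGroup.leftRel_apply, Subgroup.mem_subgroupOf]
    simpa using h2
  have hfsurj : Function.Surjective f := by
    intro q
    induction q using Quotient.inductionOn' with
    | h q =>
    obtain ⟨k, hk, h1, hh, rfl⟩ := h' q
    refine ⟨Quotient.mk'' ⟨k, hk⟩, ?_⟩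
    show ((k : Q) : Q ⧸ H) = ((k * h1 : Q) : Q ⧸ H)
    rw [QuotientGroup.eq]
    simpa using hh
  calc H.index = Nat.card (Q ⧸ H) := Subgroup.index_eq_card H
    _ = Nat.card (K ⧸ H.subgroupOf K) := (Nat.card_eq_of_bijective f ⟨hfinj, hfsurj⟩).symm
    _ = (H.subgroupOf K).index := (Subgroup.index_eq_card _).symm
    _ ∣ Nat.card K := Subgroup.index_dvd_card _

/-- The `p'`-residual of a subgroup is contained in the meet of the subgroup with the
`p'`-residual of the whole group. -/
theorem PPR.map_le {G : Type*} [Group G] [Finite G] {p : ℕ} (hp : p.Prime) (A : Subgroup G) :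
    (pPrimeResidual p A).map A.subtype ≤ A ⊓ pPrimeResidual p G := by
  rw [PPR.eq_closure (G := ↥A) hp, MonoidHom.map_closure, Subgroup.closure_le]
  rintro x ⟨a, ⟨k, hk⟩, rfl⟩
  refine Subgroup.mem_inf.mpr ⟨a.2, ?_⟩
  rw [PPR.eq_closure hp]
  refine Subgroup.subset_closure ⟨k, ?_⟩
  rw [orderOf_injective A.subtype A.subtype_injective a, hk]

/-- Let the finite group `G = AB` be the mutually permutable product of `A` and `B`,
and let `p` be a prime.  Then `O^{p'}(G) = (A ∩ O^{p'}(G))(B ∩ O^{p'}(G))`; moreover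
`O^{p'}(A) ≤ A ∩ O^{p'}(G)`, `O^{p'}(B) ≤ B ∩ O^{p'}(G)`, and this product is a normal
subgroup of `G`. -/
theorem pPrimeResidual_eq_mul_inter_of_mutuallyPermutable
    {G : Type*} [Group G] [Finite G] (p : ℕ) (hp : p.Prime)
    (A B : Subgroup G) (hAB : MutuallyPermutableProduct A B) :
    ((A ⊓ pPrimeResidual p G : Subgroup G) : Set G) *
        ((B ⊓ pPrimeResidual p G : Subgroup G) : Set G) =
      ((pPrimeResidual p G : Subgroup G) : Set G) ∧
    (pPrimeResidual p A).map A.subtype ≤ A ⊓ pPrimeResidual p G ∧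
    (pPrimeResidual p B).map B.subtype ≤ B ⊓ pPrimeResidual p G ∧
    ((A ⊓ pPrimeResidual p G) ⊔ (B ⊓ pPrimeResidual p G)).Normal := by
  classical
  haveI : Fact p.Prime := ⟨hp⟩
  obtain ⟨hABuniv, hABperm, hBAperm⟩ := hAB
  set N := pPrimeResidual p G with hNdef
  have hNnorm : N.Normal := PPR.normal hp
  have hNind : ¬ p ∣ N.index := PPR.not_dvd_index hp
  set SA := A ⊓ N with hSA
  set SB := B ⊓ N with hSB
  have hpermAB : (A : Set G) * ↑(B ⊓ N) = ↑(B ⊓ N) * ↑A := hABperm _ inf_le_left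
  have h1 : (SA : Set G) * (SB : Set G) = (N : Set G) ∩ ((A : Set G) * ↑(B ⊓ N)) := by
    rw [hSA, hSB, inf_comm A N]
    exact Subgroup.inf_mul_assoc N A (B ⊓ N) inf_le_right
  have h2 : (SB : Set G) * (SA : Set G) = ((B ⊓ N : Subgroup G) : Set G) * ↑A ∩ ↑N := by
    rw [hSA, hSB]
    exact Subgroup.mul_inf_assoc (B ⊓ N) A N inf_le_right
  have hcomm : (SA : Set G) * (SB : Set G) = (SB : Set G) * (SA : Set G) := by
    rw [h1, h2, hpermAB, Set.inter_comm]
  set E := SA ⊔ SB with hE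
  have hEset : (E : Set G) = (SA : Set G) * (SB : Set G) := PPR.coe_sup_of_mul_comm hcomm
  have hEleN : E ≤ N := sup_le inf_le_right inf_le_right
  -- A normalizes E
  have hconjA : ∀ g ∈ A, ∀ x ∈ E, g * x * g⁻¹ ∈ E := by
    intro g hg x hx
    have hx' : x ∈ (SA : Set G) * (SB : Set G) := by rw [← hEset]; exact hx
    simp only [Set.mem_mul, SetLike.mem_coe] at hx'
    obtain ⟨s, hs, u, hu, rfl⟩ := hx'
    have hsA := (Subgroup.mem_inf.mp hs).1
    have hsN := (Subgroup.mem_inf.mp hs).2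
    have huB := (Subgroup.mem_inf.mp hu).1
    have huN := (Subgroup.mem_inf.mp hu).2
    have hp1 : g * s * g⁻¹ ∈ E :=
      (le_sup_left : SA ≤ E) (Subgroup.mem_inf.mpr
        ⟨A.mul_mem (A.mul_mem hg hsA) (A.inv_mem hg), hNnorm.conj_mem s hsN g⟩)
    have hp2 : g * u * g⁻¹ ∈ E := by
      have hU : Subgroup.zpowers u ≤ B := Subgroup.zpowers_le.mpr huB
      have hperm := hABperm (Subgroup.zpowers u) hU
      have hmem : g * u ∈ (A : Set G) * ↑(Subgroup.zpowers u) :=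
        Set.mul_mem_mul hg (Subgroup.mem_zpowers u)
      rw [hperm] at hmem
      simp only [Set.mem_mul, SetLike.mem_coe] at hmem
      obtain ⟨w, hw, a1, ha1, hEq⟩ := hmem
      have hwB : w ∈ B := hU hw
      have hwN : w ∈ N := (Subgroup.zpowers_le.mpr huN) hw
      have key : g * u * g⁻¹ = w * (a1 * g⁻¹) := by rw [← mul_assoc, hEq]
      have haN : a1 * g⁻¹ ∈ N := by
        have hx2 : a1 * g⁻¹ = w⁻¹ * (g * u * g⁻¹) := by
          rw [key, inv_mul_cancel_left]
        rw [hx2]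
        exact N.mul_mem (N.inv_mem hwN) (hNnorm.conj_mem u huN g)
      rw [key]
      exact Subgroup.mul_mem _
        ((le_sup_right : SB ≤ E) (Subgroup.mem_inf.mpr ⟨hwB, hwN⟩))
        ((le_sup_left : SA ≤ E) (Subgroup.mem_inf.mpr ⟨A.mul_mem ha1 (A.inv_mem hg), haN⟩))
    have hsplit : g * (s * u) * g⁻¹ = (g * s * g⁻¹) * (g * u * g⁻¹) := by group
    rw [hsplit]
    exact Subgroup.mul_mem _ hp1 hp2
  -- B normalizes E
  have hconjB : ∀ g ∈ B, ∀ x ∈ E, g * x * g⁻¹ ∈ E := by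
    intro g hg x hx
    have hx' : x ∈ (SA : Set G) * (SB : Set G) := by rw [← hEset]; exact hx
    simp only [Set.mem_mul, SetLike.mem_coe] at hx'
    obtain ⟨s, hs, u, hu, rfl⟩ := hx'
    have hsA := (Subgroup.mem_inf.mp hs).1
    have hsN := (Subgroup.mem_inf.mp hs).2
    have huB := (Subgroup.mem_inf.mp hu).1
    have huN := (Subgroup.mem_inf.mp hu).2
    have hp2 : g * u * g⁻¹ ∈ E :=
      (le_sup_right : SB ≤ E) (Subgroup.mem_inf.mpr
        ⟨B.mul_mem (B.mul_mem hg huB) (B.inv_mem hg), hNnorm.conj_mem u huN g⟩)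
    have hp1 : g * s * g⁻¹ ∈ E := by
      have hV : Subgroup.zpowers s ≤ A := Subgroup.zpowers_le.mpr hsA
      have hperm := hBAperm (Subgroup.zpowers s) hV
      have hmem : g * s ∈ (B : Set G) * ↑(Subgroup.zpowers s) :=
        Set.mul_mem_mul hg (Subgroup.mem_zpowers s)
      rw [hperm] at hmem
      simp only [Set.mem_mul, SetLike.mem_coe] at hmem
      obtain ⟨v, hv, b1, hb1, hEq⟩ := hmem
      have hvA : v ∈ A := hV hv
      have hvN : v ∈ N := (Subgroup.zpowers_le.mpr hsN) hv
      have key : g * s * g⁻¹ = v * (b1 * g⁻¹) := by rw [← mul_assoc, hEq]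
      have hbN : b1 * g⁻¹ ∈ N := by
        have hx2 : b1 * g⁻¹ = v⁻¹ * (g * s * g⁻¹) := by
          rw [key, inv_mul_cancel_left]
        rw [hx2]
        exact N.mul_mem (N.inv_mem hvN) (hNnorm.conj_mem s hsN g)
      rw [key]
      exact Subgroup.mul_mem _
        ((le_sup_left : SA ≤ E) (Subgroup.mem_inf.mpr ⟨hvA, hvN⟩))
        ((le_sup_right : SB ≤ E) (Subgroup.mem_inf.mpr ⟨B.mul_mem hb1 (B.inv_mem hg), hbN⟩))
    have hsplit : g * (s * u) * g⁻¹ = (g * s * g⁻¹) * (g * u * g⁻¹) := by group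
    rw [hsplit]
    exact Subgroup.mul_mem _ hp1 hp2
  have hEnorm : E.Normal := by
    constructor
    intro n hn g
    have hg : g ∈ (A : Set G) * (B : Set G) := by rw [hABuniv]; trivial
    simp only [Set.mem_mul, SetLike.mem_coe] at hg
    obtain ⟨a, ha, b, hb, rfl⟩ := hg
    have hsplit : (a * b) * n * (a * b)⁻¹ = a * (b * n * b⁻¹) * a⁻¹ := by group
    rw [hsplit]
    exact hconjA a ha _ (hconjB b hb n hn)
  haveI := hEnorm
  -- The quotient by E
  set π := QuotientGroup.mk' E with hπ
  have hπsurj : Function.Surjective π := QuotientGroup.mk'_surjective E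
  set M := N.map π with hM
  have hMnorm : M.Normal := hNnorm.map π hπsurj
  have hMind : ¬ p ∣ M.index := fun hd => hNind (hd.trans (N.index_map_dvd hπsurj))
  -- neither image has order divisible by p
  have key : ∀ C : Subgroup G, C ⊓ N ≤ E → ¬ p ∣ Nat.card (C.map π) := by
    intro C hCN hdvd
    obtain ⟨y, hy⟩ := exists_prime_orderOf_dvd_card' (G := ↥(C.map π)) p hdvd
    have hyQ : orderOf ((y : G ⧸ E)) = p := by
      rw [← hy]
      exact orderOf_injective (C.map π).subtype (C.map π).subtype_injective y
    have hyM : (y : G ⧸ E) ∈ M :=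
      PPR.pelem_mem hp hMnorm hMind (k := 1) (by rw [hyQ, pow_one])
    obtain ⟨a, ha, hay⟩ := y.2
    obtain ⟨n, hn, hny⟩ := hyM
    have hπan : π (a * n⁻¹) = 1 := by
      rw [map_mul, map_inv, hay, hny, mul_inv_cancel]
    have han : a * n⁻¹ ∈ E := (QuotientGroup.eq_one_iff _).mp hπan
    have haN : a ∈ N := by
      have hx2 : a = (a * n⁻¹) * n := by group
      rw [hx2]
      exact N.mul_mem (hEleN han) hn
    have haE : a ∈ E := hCN (Subgroup.mem_inf.mpr ⟨ha, haN⟩)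
    have hy1 : (y : G ⧸ E) = 1 := by
      rw [← hay]
      exact (QuotientGroup.eq_one_iff a).mpr haE
    rw [hy1, orderOf_one] at hyQ
    exact hp.one_lt.ne' hyQ.symm
  have hcardA' : ¬ p ∣ Nat.card (A.map π) := key A le_sup_left
  have hcardB' : ¬ p ∣ Nat.card (B.map π) := key B le_sup_right
  have hQuniv : ((A.map π : Subgroup (G ⧸ E)) : Set (G ⧸ E)) *
      ((B.map π : Subgroup (G ⧸ E)) : Set (G ⧸ E)) = Set.univ := by
    apply Set.eq_univ_of_forall
    intro q
    obtain ⟨g, rfl⟩ := hπsurj q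
    have hg : g ∈ (A : Set G) * (B : Set G) := by rw [hABuniv]; trivial
    simp only [Set.mem_mul, SetLike.mem_coe] at hg
    obtain ⟨a, ha, b, hb, rfl⟩ := hg
    rw [map_mul π a b]
    exact Set.mul_mem_mul ⟨a, ha, rfl⟩ ⟨b, hb, rfl⟩
  have hQcard : ¬ p ∣ Nat.card (G ⧸ E) := by
    intro hdvd
    rw [← (A.map π).index_mul_card] at hdvd
    rcases hp.dvd_mul.mp hdvd with hd | hd
    · exact hcardB' (hd.trans (PPR.index_dvd_of_mul_eq_univ hQuniv))
    · exact hcardA' hd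
  have hEind : ¬ p ∣ E.index := by
    rw [Subgroup.index_eq_card]; exact hQcard
  have hNleE : N ≤ E := by
    rw [hNdef, PPR.eq_closure hp, Subgroup.closure_le]
    rintro x ⟨k, hk⟩
    exact PPR.pelem_mem hp hEnorm hEind hk
  have hEN : E = N := le_antisymm hEleN hNleE
  refine ⟨?_, PPR.map_le hp A, PPR.map_le hp B, ?_⟩
  · rw [← hEset, hEN]
  · exact hEnorm
end

section
/- Let G be a finite solvable group with a minimal normal subgroup N such that N = O_p(G) = F(G) = C_G(N) for a prime p, and suppose G = NK for a subgroup K with N ∩ K = 1 and K ≠ 1. Then there exists a prime q ≠ p with O_q(K) ≠ 1 such that C_N(O_q(K)) = 1, and for every Sylow q-subgroup Q of K one has N ∩ N_G(Q) = 1 and |G : N_G(Q)| = |N| · |G : N·N_G(Q)|; in particular |N| divides |G : N_G(Q)|, so that if |N| = p^n then n ≤ τ(G). -/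
open Subgroup Pointwise

/-- `τ(n)`: the maximum of the exponents occurring in the prime factorization of `n`
(with `τ(1) = 0`). -/
def tauNat (n : ℕ) : ℕ := n.factorization.support.sup n.factorization

/-- The Sylow `q`-number of `G`, i.e. the number of Sylow `q`-subgroups. -/
noncomputable def sylowNumber (q : ℕ) (G : Type*) [Group G] : ℕ := Nat.card (Sylow q G)

/-- `τ(G) = max { τ(n_q(G)) : q ∈ π(G) }`. -/
noncomputable def tauGroup (G : Type*) [Group G] : ℕ :=
  (Nat.card G).primeFactors.sup fun q => tauNat (sylowNumber q G)

/-- `O_p(G)`: the largest normal `p`-subgroup of `G`. -/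
def pCoreSub (p : ℕ) (G : Type*) [Group G] : Subgroup G :=
  sSup {H : Subgroup G | H.Normal ∧ IsPGroup p H}

/-- `F(G)`: the Fitting subgroup, the largest normal nilpotent subgroup of `G`. -/
def fitting (G : Type*) [Group G] : Subgroup G :=
  sSup {H : Subgroup G | H.Normal ∧ Group.IsNilpotent H}

/-!
`O_p(K) = 1`, since `N = O_p(G)` and `K ≅ G/N`. As `K` is solvable and nontrivial, some
`O_q(K)` is nontrivial, so `q ≠ p`. Its centralizer in `N` is normalized by `N` (which is abelian)
and by `K`, so it is a normal subgroup of `G` inside `N`; it is not `N` because `C_G(N) = N` meets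
`K` trivially, so it is trivial by minimality. If `x ∈ N` normalizes a Sylow `q`-subgroup `Q`
of `K`, then `[x, Q] ⊆ N ∩ Q = 1`, so `x` centralizes `O_q(K) ≤ Q` and `x = 1`. Hence
`|N N_G(Q)| = |N| |N_G(Q)|`, which is the index formula. Finally `|G : Q| = |K : Q| |N|` is prime
to `q`, so `Q` is Sylow in `G` and `n_q(G) = |G : N_G(Q)|` is divisible by `|N| = p ^ n`.
-/

namespace Subgroup

variable {G : Type*} [Group G]

theorem le_normalizer_map_subtype {K : Subgroup G} (A : Subgroup K) [A.Normal] :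
    K ≤ normalizer ((A.map K.subtype : Subgroup G) : Set G) := by
  refine (normal_subgroupOf_iff_le_normalizer (map_subtype_le A)).mp ?_
  rwa [subgroupOf, comap_map_eq_self_of_injective K.subtype_injective]

theorem normalizer_le_normalizer_centralizer (s : Set G) :
    normalizer s ≤ normalizer (centralizer s : Set G) :=
  (normal_subgroupOf_iff_le_normalizer (centralizer_le_normalizer s)).mp inferInstance

theorem inf_normalizer_le_centralizer {N H : Subgroup G} [hN : N.Normal] (hNH : N ⊓ H = ⊥) :
    N ⊓ normalizer (H : Set G) ≤ centralizer (H : Set G) := by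
  intro x hx
  obtain ⟨hxN, hxH⟩ := mem_inf.mp hx
  refine mem_centralizer_iff.mpr fun h hh => ?_
  have hcomm : x * h * x⁻¹ * h⁻¹ ∈ N ⊓ H := by
    refine mem_inf.mpr ⟨?_, mul_mem ((mem_normalizer_iff.mp hxH h).mp hh) (inv_mem hh)⟩
    simpa only [mul_assoc] using mul_mem hxN (hN.conj_mem x⁻¹ (inv_mem hxN) h)
  rw [hNH, mem_bot, mul_inv_eq_one, mul_inv_eq_iff_eq_mul] at hcomm
  exact hcomm.symm

theorem index_eq_card_mul_index_sup [Finite G] {N H : Subgroup G} [N.Normal] (h : N ⊓ H = ⊥) :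
    H.index = Nat.card N * (N ⊔ H).index := by
  have hcard : Nat.card ↥(N ⊔ H) = Nat.card N * Nat.card H := by
    rw [← relIndex_bot_left, ← relIndex_mul_relIndex ⊥ N _ bot_le le_sup_left,
      relIndex_bot_left, relIndex_sup_left, ← inf_relIndex_right, h, relIndex_bot_left]
  refine Nat.eq_of_mul_eq_mul_right (Nat.card_pos (α := H)) ?_
  rw [index_mul_card, ← card_mul_index (H := N ⊔ H), hcard]
  ring

end Subgroup

section PCore

variable {G : Type*} [Group G] {p : ℕ}

instance pCoreSub_normal : (pCoreSub p G).Normal :=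
  sSup_normal _ fun _ h => h.1

theorem isPGroup_pCoreSub : IsPGroup p (pCoreSub p G) :=
  Sylow.sSup_of_normal _ (fun _ h => h.2) fun _ h => h.1

theorem le_pCoreSub {H : Subgroup G} [hHn : H.Normal] (hH : IsPGroup p H) : H ≤ pCoreSub p G :=
  le_sSup ⟨hHn, hH⟩

theorem pCoreSub_le_sylow (P : Sylow p G) : pCoreSub p G ≤ P :=
  isPGroup_pCoreSub.le_sylow_of_normal P

theorem dvd_card_of_pCoreSub_ne_bot [Finite G] [Fact p.Prime] (h : pCoreSub p G ≠ ⊥) :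
    p ∣ Nat.card G :=
  (isPGroup_pCoreSub.card_eq_or_dvd.resolve_left (card_eq_one.not.mpr h)).trans
    (card_subgroup_dvd_card _)

/-- The last nontrivial term of the derived series. -/
theorem exists_normal_isMulCommutative_ne_bot [Group.IsSolvable G] [Nontrivial G] :
    ∃ A : Subgroup G, A.Normal ∧ IsMulCommutative A ∧ A ≠ ⊥ := by
  classical
  have hex : ∃ n, derivedSeries G n = ⊥ := Group.IsSolvable.solvable
  have hn : Nat.find hex ≠ 0 := fun h => by
    simpa [h, derivedSeries_zero] using Nat.find_spec hex
  obtain ⟨n, hn'⟩ := Nat.exists_eq_add_one_of_ne_zero hn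
  refine ⟨derivedSeries G n, derivedSeries_normal G n, ?_, Nat.find_min hex (by omega)⟩
  rw [← commutator_self_eq_bot_iff, ← derivedSeries_succ, ← hn']
  exact Nat.find_spec hex

/-- A Sylow subgroup of an abelian normal subgroup is characteristic in it, hence normal. -/
theorem exists_prime_pCoreSub_ne_bot [Finite G] [Group.IsSolvable G] [Nontrivial G] :
    ∃ q, q.Prime ∧ pCoreSub q G ≠ ⊥ := by
  obtain ⟨A, hAn, hAc, hA⟩ := exists_normal_isMulCommutative_ne_bot (G := G)
  have : Nontrivial A := (nontrivial_iff_ne_bot A).mpr hA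
  obtain ⟨q, hq, hqA⟩ := Nat.exists_prime_and_dvd (Finite.one_lt_card (α := A)).ne'
  have : Fact q.Prime := ⟨hq⟩
  let P : Sylow q A := default
  have : (P : Subgroup A).Characteristic := P.characteristic_of_normal inferInstance
  refine ⟨q, hq, ne_bot_of_le_ne_bot ?_ (le_pCoreSub (P.isPGroup'.map A.subtype))⟩
  exact (map_eq_bot_iff_of_injective _ A.subtype_injective).not.mpr (P.ne_bot_of_dvd_card hqA)

end PCore

section Complement

variable {G : Type*} [Group G] {N K : Subgroup G}

theorem normal_of_isComplement'_of_le_normalizer (hcomp : IsComplement' N K) {H : Subgroup G}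
    (hN : N ≤ normalizer (H : Set G)) (hK : K ≤ normalizer (H : Set G)) : H.Normal :=
  normalizer_eq_top_iff.mp (top_le_iff.mp (hcomp.sup_eq_top ▸ sup_le hN hK))

theorem pCoreSub_eq_bot_of_isComplement' {p : ℕ} (hcomp : IsComplement' (pCoreSub p G) K) :
    pCoreSub p K = ⊥ := by
  set H := (pCoreSub p K).map K.subtype
  have hHp : IsPGroup p ↥(pCoreSub p G ⊔ H) :=
    isPGroup_pCoreSub.to_sup_of_normal_left (isPGroup_pCoreSub.map K.subtype)
  have hHn : (pCoreSub p G ⊔ H).Normal := by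
    refine normal_of_isComplement'_of_le_normalizer hcomp (le_sup_left.trans le_normalizer) ?_
    exact (le_inf le_normalizer_of_normal (le_normalizer_map_subtype _)).trans
      (normalizer_inf_normalizer_le_normalizer_sup _ _)
  have hHK : H ≤ pCoreSub p G ⊓ K :=
    le_inf (le_sup_right.trans (le_pCoreSub hHp)) (map_subtype_le _)
  rw [hcomp.disjoint.eq_bot, le_bot_iff, map_eq_bot_iff_of_injective _ K.subtype_injective] at hHK
  exact hHK

theorem inf_centralizer_map_subtype_eq_bot [N.Normal]
    (hmin : ∀ M : Subgroup G, M.Normal → M ≤ N → M = ⊥ ∨ M = N)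
    (hC : N = centralizer (N : Set G)) (hcomp : IsComplement' N K) {A : Subgroup K} [A.Normal]
    (hA : A ≠ ⊥) : N ⊓ centralizer ((A.map K.subtype : Subgroup G) : Set G) = ⊥ := by
  set H := A.map K.subtype
  have hW : (N ⊓ centralizer (H : Set G)).Normal := by
    refine normal_of_isComplement'_of_le_normalizer hcomp ?_ ?_
    · exact (le_centralizer_iff.mpr (inf_le_left.trans hC.le)).trans (centralizer_le_normalizer _)
    · exact (le_inf le_normalizer_of_normal ((le_normalizer_map_subtype A).trans
        (normalizer_le_normalizer_centralizer _))).trans inf_normalizer_le_normalizer_inf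
  refine (hmin _ hW inf_le_left).resolve_right fun hNW => hA ?_
  have hHN : H ≤ N := hC ▸ le_centralizer_iff.mp (hNW ▸ inf_le_right)
  have hHK : H ≤ N ⊓ K := le_inf hHN (map_subtype_le A)
  rwa [hcomp.disjoint.eq_bot, le_bot_iff, map_eq_bot_iff_of_injective _ K.subtype_injective] at hHK

end Complement

theorem sylowNumber_eq_index_normalizer {G : Type*} [Group G] [Finite G] {q : ℕ} [Fact q.Prime]
    {P : Subgroup G} (hP : IsPGroup q P) (hq : ¬q ∣ P.index) :
    sylowNumber q G = (normalizer (P : Set G)).index :=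
  Sylow.card_eq_index_normalizer (hP.toSylow hq)

theorem le_tauNat_of_pow_dvd {p m n : ℕ} (hp : p.Prime) (hm : m ≠ 0) (h : p ^ n ∣ m) :
    n ≤ tauNat m := by
  have hn : n ≤ m.factorization p := (hp.pow_dvd_iff_le_factorization hm).mp h
  by_cases hp0 : m.factorization p = 0
  · omega
  · exact hn.trans (Finset.le_sup (Finsupp.mem_support_iff.mpr hp0))

theorem tauNat_sylowNumber_le_tauGroup {G : Type*} [Group G] {q : ℕ}
    (hq : q ∈ (Nat.card G).primeFactors) : tauNat (sylowNumber q G) ≤ tauGroup G :=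
  Finset.le_sup (f := fun r => tauNat (sylowNumber r G)) hq

theorem exists_prime_card_dvd_index_normalizer_general
    {G : Type*} [Group G] [Finite G] (hG : IsSolvable G) (p : ℕ) (hp : p.Prime)
    (N : Subgroup G) (hN : N.Normal)
    (hmin : ∀ M : Subgroup G, M.Normal → M ≤ N → M = ⊥ ∨ M = N)
    (hOp : N = pCoreSub p G)
    (hC : N = Subgroup.centralizer (N : Set G))
    (K : Subgroup G) (hGNK : (N : Set G) * (K : Set G) = Set.univ)
    (hNK : N ⊓ K = ⊥) (hK : K ≠ ⊥) :
    ∃ q : ℕ, q.Prime ∧ q ≠ p ∧ pCoreSub q K ≠ ⊥ ∧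
      N ⊓ Subgroup.centralizer (((pCoreSub q K).map K.subtype : Subgroup G) : Set G) = ⊥ ∧
      ∀ Q : Sylow q K,
        N ⊓ (Subgroup.normalizer (((Q : Subgroup K).map K.subtype : Subgroup G) : Set G)) = ⊥ ∧
        (Subgroup.normalizer (((Q : Subgroup K).map K.subtype : Subgroup G) : Set G)).index =
          Nat.card N * (N ⊔ (Subgroup.normalizer (((Q : Subgroup K).map K.subtype : Subgroup G) : Set G))).index ∧
        Nat.card N ∣ (Subgroup.normalizer (((Q : Subgroup K).map K.subtype : Subgroup G) : Set G)).index ∧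
        ∀ n : ℕ, Nat.card N = p ^ n → n ≤ tauGroup G := by
  have hcomp : IsComplement' N K :=
    isComplement'_of_disjoint_and_mul_eq_univ (disjoint_iff.mpr hNK) hGNK
  have : Group.IsSolvable G := hG
  have : Nontrivial K := (nontrivial_iff_ne_bot K).mpr hK
  obtain ⟨q, hq, hqK⟩ := exists_prime_pCoreSub_ne_bot (G := K)
  have : Fact q.Prime := ⟨hq⟩
  have hqp : q ≠ p := by
    rintro rfl
    exact hqK (pCoreSub_eq_bot_of_isComplement' (hOp ▸ hcomp))
  have hCR := inf_centralizer_map_subtype_eq_bot hmin hC hcomp hqK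
  refine ⟨q, hq, hqp, hqK, hCR, fun Q => ?_⟩
  set Q' := (Q : Subgroup K).map K.subtype
  have hNQ : N ⊓ normalizer (Q' : Set G) = ⊥ := by
    have hNQ' : N ⊓ Q' = ⊥ :=
      eq_bot_iff.mpr ((inf_le_inf_left N (map_subtype_le _)).trans hNK.le)
    rw [eq_bot_iff, ← hCR]
    exact le_inf inf_le_left ((inf_normalizer_le_centralizer hNQ').trans
      (centralizer_le (SetLike.coe_subset_coe.mpr (map_mono (pCoreSub_le_sylow Q)))))
  have hindex := index_eq_card_mul_index_sup hNQ
  refine ⟨hNQ, hindex, Dvd.intro _ hindex.symm, fun n hn => ?_⟩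
  have hqQ' : ¬q ∣ Q'.index := by
    rw [index_map_subtype, hcomp.index_eq_card, hn, hq.dvd_mul, not_or]
    exact ⟨Q.not_dvd_index,
      fun h => hqp ((Nat.prime_dvd_prime_iff_eq hq hp).mp (hq.dvd_of_dvd_pow h))⟩
  have hsyl := sylowNumber_eq_index_normalizer (Q.isPGroup'.map K.subtype) hqQ'
  have hqG : q ∈ (Nat.card G).primeFactors :=
    Nat.mem_primeFactors.mpr
      ⟨hq, (dvd_card_of_pCoreSub_ne_bot hqK).trans (card_subgroup_dvd_card K), Nat.card_pos.ne'⟩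
  calc n ≤ tauNat (sylowNumber q G) := le_tauNat_of_pow_dvd hp (hsyl ▸ index_ne_zero_of_finite)
        (hsyl ▸ hn ▸ Dvd.intro _ hindex.symm)
    _ ≤ tauGroup G := tauNat_sylowNumber_le_tauGroup hqG

/-- Let `G` be a finite solvable group with a minimal normal subgroup `N` such that
`N = O_p(G) = F(G) = C_G(N)` for a prime `p`, and suppose `G = NK` with `N ∩ K = 1`
and `K ≠ 1`.  Then there is a prime `q ≠ p` with `O_q(K) ≠ 1` and `C_N(O_q(K)) = 1`,
and for every Sylow `q`-subgroup `Q` of `K` one has `N ∩ N_G(Q) = 1` and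
`|G : N_G(Q)| = |N|·|G : N·N_G(Q)|`; in particular `|N|` divides `|G : N_G(Q)|`, so
that if `|N| = p^n` then `n ≤ τ(G)`. -/
theorem exists_prime_card_dvd_index_normalizer
    {G : Type*} [Group G] [Finite G] (hG : IsSolvable G) (p : ℕ) (hp : p.Prime)
    (N : Subgroup G) (hN : N.Normal) (hNbot : N ≠ ⊥)
    (hmin : ∀ M : Subgroup G, M.Normal → M ≤ N → M = ⊥ ∨ M = N)
    (hOp : N = pCoreSub p G) (hF : N = fitting G)
    (hC : N = Subgroup.centralizer (N : Set G))
    (K : Subgroup G) (hGNK : (N : Set G) * (K : Set G) = Set.univ)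
    (hNK : N ⊓ K = ⊥) (hK : K ≠ ⊥) :
    ∃ q : ℕ, q.Prime ∧ q ≠ p ∧ pCoreSub q K ≠ ⊥ ∧
      N ⊓ Subgroup.centralizer (((pCoreSub q K).map K.subtype : Subgroup G) : Set G) = ⊥ ∧
      ∀ Q : Sylow q K,
        N ⊓ (Subgroup.normalizer (((Q : Subgroup K).map K.subtype : Subgroup G) : Set G)) = ⊥ ∧
        (Subgroup.normalizer (((Q : Subgroup K).map K.subtype : Subgroup G) : Set G)).index =
          Nat.card N * (N ⊔ (Subgroup.normalizer (((Q : Subgroup K).map K.subtype : Subgroup G) : Set G))).index ∧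
        Nat.card N ∣ (Subgroup.normalizer (((Q : Subgroup K).map K.subtype : Subgroup G) : Set G)).index ∧
        ∀ n : ℕ, Nat.card N = p ^ n → n ≤ tauGroup G :=
  exists_prime_card_dvd_index_normalizer_general hG p hp N hN hmin hOp hC K hGNK hNK hK
end
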